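/- Let A be an oriented graph on a type V that is a push clique, and let v be a vertex whose set of neighbors (vertices adjacent to v in A) is exactly {x, y} with x ≠ y. Then every vertex other than v, x, y is adjacent in A to both x and y. -/

import Mathlib

/-- A directed graph `A` on `V` is an oriented graph: irreflexive and asymmetric. -/
def IsOriented {V : Type*} (A : V → V → Prop) : Prop :=
  (∀ v, ¬ A v v) ∧ ∀ u v, A u v → ¬ A v u

/-- `u` and `v` are adjacent in `A`. -/
def Adj {V : Type*} (A : V → V → Prop) (u v : V) : Prop :=
  A u v ∨ A v u

/-- The push of `A` by the vertex set `S`: arcs with exactly one endpoint in `S`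
are reversed. -/
def push {V : Type*} (S : Set V) (A : V → V → Prop) (u v : V) : Prop :=
  (Xor' (u ∈ S) (v ∈ S) ∧ A v u) ∨ (¬ Xor' (u ∈ S) (v ∈ S) ∧ A u v)

/-- `u` and `v` agree on `w`. -/
def AgreeOn {V : Type*} (A : V → V → Prop) (u v w : V) : Prop :=
  (A w u ∧ A w v) ∨ (A u w ∧ A v w)

/-- `u` and `v` disagree on `w`. -/
def DisagreeOn {V : Type*} (A : V → V → Prop) (u v w : V) : Prop :=
  (A u w ∧ A w v) ∨ (A w u ∧ A v w)

/-- `u` and `v` are joined by a directed 2-path in `A`. -/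
def TwoPath {V : Type*} (A : V → V → Prop) (u v : V) : Prop :=
  ∃ w, (A u w ∧ A w v) ∨ (A v w ∧ A w u)

/-- `A` is an oriented clique: any two distinct vertices are adjacent or joined
by a directed 2-path. -/
def IsOrientedClique {V : Type*} (A : V → V → Prop) : Prop :=
  ∀ u v, u ≠ v → Adj A u v ∨ TwoPath A u v

/-- `A` is a push clique: every push of `A` is an oriented clique. -/
def IsPushClique {V : Type*} (A : V → V → Prop) : Prop :=
  ∀ S : Set V, IsOrientedClique (push S A)

/-- `A` is an orientation of the simple graph `G`. -/
def IsOrientationOf {V : Type*} (A : V → V → Prop) (G : SimpleGraph V) : Prop :=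
  IsOriented A ∧ ∀ u v, Adj A u v ↔ G.Adj u v

/-- `G` is an underlying push clique. -/
def IsUnderlyingPushClique {V : Type*} (G : SimpleGraph V) : Prop :=
  ∃ A : V → V → Prop, IsOrientationOf A G ∧ IsPushClique A

/-- `G` is an underlying oriented clique. -/
def IsUnderlyingOrientedClique {V : Type*} (G : SimpleGraph V) : Prop :=
  ∃ A : V → V → Prop, IsOrientationOf A G ∧ IsOrientedClique A


/-!
Two vertices `u ≠ v` that are not adjacent must be joined by a directed 2-path in every push.
A 2-path `u - w - v` through `w` in `A` means `u, v` disagree on `w`; pushing by `{u}` reverses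
the arc `uw` but not `vw`, so a 2-path through the same `w` in the push means `u, v` agree on `w`
in `A`, which asymmetry forbids. Hence nonadjacent vertices of a push clique have two distinct
common neighbours; for `z` and the vertex `v` of degree two these must be `x` and `y`.
-/

section

variable {V : Type*} {A : V → V → Prop} {u v w : V}

theorem Adj.symm (h : Adj A u v) : Adj A v u :=
  Or.symm h

theorem IsOriented.ne_of_adj (hA : IsOriented A) (h : Adj A u v) : u ≠ v := by
  rintro rfl
  exact h.elim (hA.1 u) (hA.1 u)

theorem adj_push_iff (S : Set V) : Adj (push S A) u v ↔ Adj A u v := by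
  simp only [Adj, push, Xor', Xor]
  tauto

theorem AgreeOn.adj_left (h : AgreeOn A u v w) : Adj A u w :=
  h.symm.imp And.left And.left

theorem AgreeOn.adj_right (h : AgreeOn A u v w) : Adj A v w :=
  h.symm.imp And.right And.right

theorem DisagreeOn.adj_left (h : DisagreeOn A u v w) : Adj A u w :=
  h.imp And.left And.left

theorem DisagreeOn.adj_right (h : DisagreeOn A u v w) : Adj A v w :=
  (h.imp And.right And.right).symm

theorem IsOriented.not_agreeOn_and_disagreeOn (hA : IsOriented A) :
    ¬ (AgreeOn A u v w ∧ DisagreeOn A u v w) := by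
  have := hA.2
  unfold AgreeOn DisagreeOn
  grind

theorem twoPath_iff_exists_disagreeOn : TwoPath A u v ↔ ∃ w, DisagreeOn A u v w := by
  unfold TwoPath DisagreeOn
  grind

theorem push_empty : push ∅ A = A := by
  ext u v
  simp [push, Xor', Xor]

theorem disagreeOn_push_singleton_iff (hw : w ≠ u) (hv : v ≠ u) :
    DisagreeOn (push {u} A) u v w ↔ AgreeOn A u v w := by
  simp only [DisagreeOn, AgreeOn, push, Xor', Xor, Set.mem_singleton_iff, hw, hv]
  tauto

theorem IsPushClique.exists_disagreeOn_push (h : IsPushClique A) (S : Set V) (huv : u ≠ v)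
    (hadj : ¬ Adj A u v) : ∃ w, DisagreeOn (push S A) u v w := by
  rw [← twoPath_iff_exists_disagreeOn]
  exact (h S u v huv).resolve_left fun h' => hadj ((adj_push_iff S).1 h')

theorem IsPushClique.exists_ne_common_adj (hA : IsOriented A) (h : IsPushClique A) (huv : u ≠ v)
    (hadj : ¬ Adj A u v) :
    ∃ w₁ w₂, w₁ ≠ w₂ ∧ (Adj A u w₁ ∧ Adj A v w₁) ∧ (Adj A u w₂ ∧ Adj A v w₂) := by
  obtain ⟨w₁, hdis⟩ := h.exists_disagreeOn_push ∅ huv hadj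
  rw [push_empty] at hdis
  obtain ⟨w₂, hdis'⟩ := h.exists_disagreeOn_push {u} huv hadj
  have hw₂ : w₂ ≠ u := (hA.ne_of_adj ((adj_push_iff _).1 hdis'.adj_left)).symm
  have hagree := (disagreeOn_push_singleton_iff hw₂ huv.symm).1 hdis'
  refine ⟨w₁, w₂, ?_, ⟨hdis.adj_left, hdis.adj_right⟩, ⟨hagree.adj_left, hagree.adj_right⟩⟩
  rintro rfl
  exact hA.not_agreeOn_and_disagreeOn ⟨hagree, hdis⟩

end

theorem stmt_17_general {V : Type*} (A : V → V → Prop) (hA : IsOriented A)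
    (h : IsPushClique A) (v x y : V)
    (hnbr : ∀ u : V, Adj A v u ↔ (u = x ∨ u = y)) :
    ∀ z : V, z ≠ v → z ≠ x → z ≠ y → Adj A z x ∧ Adj A z y := by
  intro z hzv hzx hzy
  have hzv_adj : ¬ Adj A z v := fun hz => ((hnbr z).1 hz.symm).elim hzx hzy
  obtain ⟨w₁, w₂, hne, ⟨hzw₁, hvw₁⟩, ⟨hzw₂, hvw₂⟩⟩ :=
    h.exists_ne_common_adj hA hzv hzv_adj
  rcases (hnbr w₁).1 hvw₁ with rfl | rfl <;> rcases (hnbr w₂).1 hvw₂ with rfl | rfl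
  exacts [absurd rfl hne, ⟨hzw₁, hzw₂⟩, ⟨hzw₂, hzw₁⟩, absurd rfl hne]

theorem stmt_17 {V : Type*} (A : V → V → Prop) (hA : IsOriented A)
    (h : IsPushClique A) (v x y : V) (hxy : x ≠ y)
    (hnbr : ∀ u : V, Adj A v u ↔ (u = x ∨ u = y)) :
    ∀ z : V, z ≠ v → z ≠ x → z ≠ y → Adj A z x ∧ Adj A z y :=
  stmt_17_general A hA h v x y hnbr
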